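/- arXiv:2407.11285 — 2 statements merged into one kernel-verified Lean document; each statement's English description precedes it below -/
import Mathlib

section
/- A nontrivial finite projective rectangle of order (m,n) satisfies n ≥ m^2. -/
open scoped Classical

/-- A projective rectangle: an incidence structure satisfying axioms (A1)–(A6). -/
structure ProjRect (P L : Type*) where
  incid : P → L → Prop
  /-- (A4) the special point -/
  D : P
  /-- (A1) every two distinct points are incident with exactly one line -/
  A1 : ∀ p q : P, p ≠ q → ∃! l : L, incid p l ∧ incid q l
  /-- (A2) there exist four points with no three collinear -/
  A2 : ∃ p1 p2 p3 p4 : P, p1 ≠ p2 ∧ p1 ≠ p3 ∧ p1 ≠ p4 ∧ p2 ≠ p3 ∧ p2 ≠ p4 ∧ p3 ≠ p4 ∧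
    ∀ l : L, ¬(incid p1 l ∧ incid p2 l ∧ incid p3 l) ∧ ¬(incid p1 l ∧ incid p2 l ∧ incid p4 l) ∧
      ¬(incid p1 l ∧ incid p3 l ∧ incid p4 l) ∧ ¬(incid p2 l ∧ incid p3 l ∧ incid p4 l)
  /-- (A3) every line has at least three points -/
  A3 : ∀ l : L, ∃ p1 p2 p3 : P, p1 ≠ p2 ∧ p1 ≠ p3 ∧ p2 ≠ p3 ∧
    incid p1 l ∧ incid p2 l ∧ incid p3 l
  /-- (A5) each special line intersects every other line in exactly one point -/
  A5 : ∀ s l : L, incid D s → l ≠ s → ∃! p : P, incid p s ∧ incid p l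
  /-- (A6) Pasch-type axiom -/
  A6 : ∀ l1 l2 g h : L, ¬incid D l1 → ¬incid D l2 → (∃ p : P, incid p l1 ∧ incid p l2) →
    (∃ p1 p2 p3 p4 : P, p1 ≠ p2 ∧ p1 ≠ p3 ∧ p1 ≠ p4 ∧ p2 ≠ p3 ∧ p2 ≠ p4 ∧ p3 ≠ p4 ∧
      incid p1 g ∧ incid p1 l1 ∧ incid p2 g ∧ incid p2 l2 ∧
      incid p3 h ∧ incid p3 l1 ∧ incid p4 h ∧ incid p4 l2) →
    ∃ p : P, incid p g ∧ incid p h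

namespace ProjRect

variable {P L : Type*} (R : ProjRect P L)

/-- A line is special if it is incident with the special point `D`. -/
def SpecialLine (l : L) : Prop := R.incid R.D l

/-- A line is ordinary if it is not incident with `D`. -/
def OrdinaryLine (l : L) : Prop := ¬ R.incid R.D l

/-- A point is ordinary if it is not `D`. -/
def OrdinaryPoint (p : P) : Prop := p ≠ R.D

/-- The set of points of a line. -/
def points (l : L) : Set P := {p | R.incid p l}

/-- `R` has order `(m, n)`: there are `m+1` special lines, each with `n+1` points. -/
def HasOrder (m n : ℕ) : Prop :=
  {l : L | R.SpecialLine l}.ncard = m + 1 ∧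
  ∀ l : L, R.SpecialLine l → (R.points l).ncard = n + 1

/-- Nontrivial: there exist two disjoint ordinary lines (i.e. `R` is not a projective plane). -/
def Nontrivial : Prop :=
  ∃ l1 l2 : L, R.OrdinaryLine l1 ∧ R.OrdinaryLine l2 ∧ ∀ p : P, ¬(R.incid p l1 ∧ R.incid p l2)

/-- An incidence substructure `(Ps, Ls)` that is a projective plane. -/
def IsSubplane (Ps : Set P) (Ls : Set L) : Prop :=
  (∀ p ∈ Ps, ∀ q ∈ Ps, p ≠ q → ∃! l : L, l ∈ Ls ∧ R.incid p l ∧ R.incid q l) ∧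
  (∀ l ∈ Ls, ∀ l' ∈ Ls, l ≠ l' → ∃! p : P, p ∈ Ps ∧ R.incid p l ∧ R.incid p l') ∧
  (∀ l ∈ Ls, ∀ p : P, R.incid p l → p ∈ Ps) ∧
  (∃ p1 ∈ Ps, ∃ p2 ∈ Ps, ∃ p3 ∈ Ps, ∃ p4 ∈ Ps,
    p1 ≠ p2 ∧ p1 ≠ p3 ∧ p1 ≠ p4 ∧ p2 ≠ p3 ∧ p2 ≠ p4 ∧ p3 ≠ p4 ∧
    ∀ l ∈ Ls, ¬(R.incid p1 l ∧ R.incid p2 l ∧ R.incid p3 l) ∧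
      ¬(R.incid p1 l ∧ R.incid p2 l ∧ R.incid p4 l) ∧
      ¬(R.incid p1 l ∧ R.incid p3 l ∧ R.incid p4 l) ∧
      ¬(R.incid p2 l ∧ R.incid p3 l ∧ R.incid p4 l))

/-- A plane: a maximal subplane. -/
def IsPlane (Ps : Set P) (Ls : Set L) : Prop :=
  R.IsSubplane Ps Ls ∧
  ∀ Ps' Ls', R.IsSubplane Ps' Ls' → Ps ⊆ Ps' → Ls ⊆ Ls' → Ps = Ps' ∧ Ls = Ls'

/-- The graph of lines: vertices are the ordinary lines, adjacent iff they intersect. -/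
def lineGraph : SimpleGraph {l : L // R.OrdinaryLine l} where
  Adj l1 l2 := l1 ≠ l2 ∧ ∃ p : P, R.incid p l1.1 ∧ R.incid p l2.1
  symm := by
    constructor
    rintro a b ⟨hne, p, h1, h2⟩
    exact ⟨hne.symm, p, h2, h1⟩
  loopless := by
    constructor
    rintro a ⟨hne, -⟩
    exact hne rfl

end ProjRect

/-!
Ordinary lines have `m + 1` points and special lines `n + 1`.

If `l₁, l₂` are disjoint ordinary lines and a special line `s` meets them in `a₀, b₀`, send each of
the `m (m - 1)` pairs `(a, b) ∈ (l₁ ∖ a₀) × (l₂ ∖ b₀)` joined by an ordinary line to the point where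
that line meets `s`. This lands in `s ∖ {D, a₀, b₀}` and is injective, because by the Pasch axiom
(A6) two ordinary transversals of `l₁, l₂` cannot meet off `l₁ ∪ l₂`. Hence `m (m - 1) ≤ n - 2`.

Fix `x` on an ordinary line `l₁`. The other `n - 1` ordinary lines through `x` fall into classes
(their planes with `l₁`): the ordinary lines through `x` other than `l₁` meeting a fixed ordinary
line `g ∌ x` that meets `l₁`. By (A6) two classes sharing a line coincide, and each class has
`m - 1` lines, one through each point of `g` off `l₁` and off the special line through `x`.
Hence `m - 1 ∣ n - 1`, and with the first bound the quotient is at least `m + 1`, i.e. `n ≥ m²`.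
-/

open Finset

theorem Finset.dvd_card_of_cover {ι α : Type*} [DecidableEq α] {S : Finset α} {I : Set ι}
    {k : ℕ} (B : ι → Finset α) (hcover : ∀ a ∈ S, ∃ i ∈ I, a ∈ B i) (hsub : ∀ i ∈ I, B i ⊆ S)
    (heq : ∀ i ∈ I, ∀ j ∈ I, ∀ a ∈ B i, a ∈ B j → B i = B j) (hcard : ∀ i ∈ I, #(B i) = k) :
    k ∣ #S := by
  let C : α → Finset α := fun a => {b ∈ S | ∃ i ∈ I, a ∈ B i ∧ b ∈ B i}
  have hC : ∀ a ∈ S, ∀ i ∈ I, a ∈ B i → C a = B i := by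
    intro a ha i hi hai
    ext b
    simp only [C, mem_filter]
    exact ⟨fun ⟨_, j, hj, haj, hbj⟩ => heq j hj i hi a haj hai ▸ hbj,
      fun hbi => ⟨hsub i hi hbi, i, hi, hai, hbi⟩⟩
  rw [card_eq_sum_card_image C S]
  refine dvd_sum fun c hc => ?_
  obtain ⟨a, ha, rfl⟩ := mem_image.1 hc
  obtain ⟨i, hi, hai⟩ := hcover a ha
  have : {b ∈ S | C b = C a} = B i := by
    ext b
    rw [mem_filter, hC a ha i hi hai]
    refine ⟨fun ⟨hb, hCb⟩ => ?_, fun hbi => ⟨hsub i hi hbi, hC b (hsub i hi hbi) i hi hbi⟩⟩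
    obtain ⟨j, hj, hbj⟩ := hcover b hb
    exact hCb ▸ hC b hb j hj hbj ▸ hbj
  rw [this, hcard i hi]

theorem Nat.sq_le_of_sub_one_dvd {m n : ℕ} (hdvd : m - 1 ∣ n - 1) (hle : m * (m - 1) + 2 ≤ n) :
    m ^ 2 ≤ n := by
  obtain ⟨B, hB⟩ := hdvd
  obtain ⟨k, rfl⟩ : ∃ k, m = k + 1 := ⟨m - 1, by rcases m with _ | _ <;> simp_all; omega⟩
  rw [Nat.add_sub_cancel] at hB hle
  have hkB : k + 1 < B := Nat.lt_of_mul_lt_mul_left (by rw [mul_comm]; omega : k * (k + 1) < k * B)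
  have hkB' : k * (k + 2) ≤ k * B := Nat.mul_le_mul_left k hkB
  zify [show 1 ≤ n by omega] at hB hkB' ⊢
  nlinarith

namespace ProjRect

variable {P L : Type*} (R : ProjRect P L)

def Meets (l l' : L) : Prop := ∃ p, R.incid p l ∧ R.incid p l'

variable {R}

theorem Meets.symm {l l' : L} (h : R.Meets l l') : R.Meets l' l :=
  let ⟨p, hp, hp'⟩ := h
  ⟨p, hp', hp⟩

theorem line_eq {p q : P} {l l' : L} (hpq : p ≠ q) (hp : R.incid p l) (hq : R.incid q l)
    (hp' : R.incid p l') (hq' : R.incid q l') : l = l' :=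
  (R.A1 p q hpq).unique ⟨hp, hq⟩ ⟨hp', hq'⟩

theorem point_eq {p q : P} {l l' : L} (hl : l ≠ l') (hp : R.incid p l) (hp' : R.incid p l')
    (hq : R.incid q l) (hq' : R.incid q l') : p = q := by
  by_contra hpq
  exact hl (line_eq hpq hp hq hp' hq')

theorem ne_D_of_incid {p : P} {l : L} (hl : R.OrdinaryLine l) (hp : R.incid p l) : p ≠ R.D := by
  rintro rfl
  exact hl hp

theorem ne_of_special_of_ordinary {s l : L} (hs : R.SpecialLine s) (hl : R.OrdinaryLine l) :
    l ≠ s := by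
  rintro rfl
  exact hl hs

theorem exists_special_incid {p : P} (hp : p ≠ R.D) : ∃ s, R.SpecialLine s ∧ R.incid p s :=
  let ⟨s, hps, hDs⟩ := (R.A1 p R.D hp).exists
  ⟨s, hDs, hps⟩

theorem meets_of_special {s l : L} (hs : R.SpecialLine s) (hl : l ≠ s) : R.Meets s l :=
  (R.A5 s l hs hl).exists

theorem exists_incid_ne_ne (l : L) (p q : P) : ∃ r, R.incid r l ∧ r ≠ p ∧ r ≠ q := by
  obtain ⟨a, b, c, hab, hac, hbc, ha, hb, hc⟩ := R.A3 l
  by_cases hap : a = p ∨ a = q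
  · by_cases hbp : b = p ∨ b = q
    · exact ⟨c, hc, by grind⟩
    · exact ⟨b, hb, by tauto⟩
  · exact ⟨a, ha, by tauto⟩

theorem meets_of_transversals {l1 l2 g h : L} (hl1 : R.OrdinaryLine l1)
    (hl2 : R.OrdinaryLine l2) (h12 : R.Meets l1 l2) {p1 p2 p3 p4 : P}
    (hp1g : R.incid p1 g) (hp1 : R.incid p1 l1) (hp2g : R.incid p2 g) (hp2 : R.incid p2 l2)
    (hp3h : R.incid p3 h) (hp3 : R.incid p3 l1) (hp4h : R.incid p4 h) (hp4 : R.incid p4 l2)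
    (hg : p1 ≠ p2) (hh : p3 ≠ p4) : R.Meets g h := by
  by_cases h13 : p1 = p3
  · exact ⟨p1, hp1g, h13 ▸ hp3h⟩
  by_cases h14 : p1 = p4
  · exact ⟨p1, hp1g, h14 ▸ hp4h⟩
  by_cases h23 : p2 = p3
  · exact ⟨p2, hp2g, h23 ▸ hp3h⟩
  by_cases h24 : p2 = p4
  · exact ⟨p2, hp2g, h24 ▸ hp4h⟩
  exact R.A6 l1 l2 g h hl1 hl2 h12
    ⟨p1, p2, p3, p4, hg, h13, h14, h23, h24, hh, hp1g, hp1, hp2g, hp2, hp3h, hp3, hp4h, hp4⟩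

theorem exists_transversal {l1 t : L} {x : P} (hl1 : R.OrdinaryLine l1) (hx : R.incid x l1)
    (hxt : R.incid x t) (htl1 : t ≠ l1) :
    ∃ g, R.OrdinaryLine g ∧ ¬ R.incid x g ∧ R.Meets g l1 ∧ R.Meets g t := by
  obtain ⟨w, hwt, hwx, hwD⟩ := exists_incid_ne_ne (R := R) t x R.D
  obtain ⟨s, hs, hws⟩ := exists_special_incid hwD
  obtain ⟨c, hcs, hcl1⟩ := meets_of_special hs (ne_of_special_of_ordinary hs hl1)
  obtain ⟨u, hul1, hux, huc⟩ := exists_incid_ne_ne (R := R) l1 x c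
  have hwu : w ≠ u := fun hwu => htl1 (line_eq hwx hwt hxt (hwu ▸ hul1) hx)
  obtain ⟨g, hwg, hug⟩ := (R.A1 w u hwu).exists
  refine ⟨g, fun hg => ?_, fun hxg => ?_, ⟨u, hug, hul1⟩, ⟨w, hwg, hwt⟩⟩
  · have hgs : g = s := line_eq hwD hwg hg hws hs
    exact huc (point_eq (ne_of_special_of_ordinary hs hl1) hul1 (hgs ▸ hug) hcl1 hcs)
  · have hgt : g = t := line_eq hwx.symm hxg hwg hxt hwt
    exact htl1 (line_eq hux (hgt ▸ hug) hxt hul1 hx)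

theorem meets_of_common_transversal {l1 t2 t g g' : L} {x : P} (hl1 : R.OrdinaryLine l1)
    (hx : R.incid x l1) (ht2 : R.OrdinaryLine t2) (hxt2 : R.incid x t2) (ht2l1 : t2 ≠ l1)
    (hxt : R.incid x t) (hg : R.OrdinaryLine g)
    (hxg : ¬ R.incid x g) (hxg' : ¬ R.incid x g') (hgl1 : R.Meets g l1) (hg'l1 : R.Meets g' l1)
    (hgt2 : R.Meets g t2) (hg't2 : R.Meets g' t2) (hgt : R.Meets g t) : R.Meets g' t := by
  -- (A6) on `t2, l1` makes `g, g'` meet at some `z`; then (A6) on `g, l1`, or on `g, t2` when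
  -- `z` lies on `l1`, carries the meeting of `g` with `t` over to `g'`.
  obtain ⟨u, hug, hul1⟩ := hgl1
  obtain ⟨u', hu'g', hu'l1⟩ := hg'l1
  obtain ⟨w2, hw2g, hw2t2⟩ := hgt2
  obtain ⟨w2', hw2'g', hw2't2⟩ := hg't2
  obtain ⟨w, hwg, hwt⟩ := hgt
  have eq_x : ∀ {p}, R.incid p t2 → R.incid p l1 → p = x :=
    fun hpt2 hpl1 => point_eq ht2l1 hpt2 hpl1 hxt2 hx
  have hg_ne_x : ∀ {p}, R.incid p g → p ≠ x := fun hp hpx => hxg (hpx ▸ hp)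
  have hg'_ne_x : ∀ {p}, R.incid p g' → p ≠ x := fun hp hpx => hxg' (hpx ▸ hp)
  obtain ⟨z, hzg, hzg'⟩ := meets_of_transversals ht2 hl1 ⟨x, hxt2, hx⟩
    hw2g hw2t2 hug hul1 hw2'g' hw2't2 hu'g' hu'l1
    (fun h => hg_ne_x hw2g (eq_x hw2t2 (h ▸ hul1)))
    (fun h => hg'_ne_x hw2'g' (eq_x hw2't2 (h ▸ hu'l1)))
  by_cases hzu' : z = u'
  · exact (meets_of_transversals hg ht2 ⟨w2, hw2g, hw2t2⟩ hwt hwg hxt hxt2 hzg' hzg hw2'g'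
      hw2't2 (hg_ne_x hwg) fun h => hg_ne_x hzg (eq_x (h ▸ hw2't2) (hzu' ▸ hu'l1))).symm
  · exact (meets_of_transversals hg hl1 ⟨u, hug, hul1⟩ hwt hwg hxt hx hzg' hzg hu'g' hu'l1
      (hg_ne_x hwg) hzu').symm

theorem transversal_eq {l1 l2 g g' : L} {z a b a' b' : P} (hd : ¬ R.Meets l1 l2)
    (hg : R.OrdinaryLine g) (hg' : R.OrdinaryLine g') (hzg : R.incid z g) (hzg' : R.incid z g')
    (hz1 : ¬ R.incid z l1) (hz2 : ¬ R.incid z l2)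
    (ha : R.incid a l1) (hag : R.incid a g) (hb : R.incid b l2) (hbg : R.incid b g)
    (ha' : R.incid a' l1) (ha'g' : R.incid a' g') (hb' : R.incid b' l2) (hb'g' : R.incid b' g') :
    g = g' := by
  by_contra hgg'
  have hza : ∀ {p}, R.incid p l1 → z ≠ p := fun hp hzp => hz1 (hzp ▸ hp)
  have hzb : ∀ {p}, R.incid p l2 → z ≠ p := fun hp hzp => hz2 (hzp ▸ hp)
  exact hd (meets_of_transversals hg hg' ⟨z, hzg, hzg'⟩ ha hag ha' ha'g' hb hbg hb' hb'g'
    (fun h => hgg' (line_eq (hza ha) hzg hag hzg' (h ▸ ha'g')))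
    (fun h => hgg' (line_eq (hzb hb) hzg hbg hzg' (h ▸ hb'g'))))

section Finite

variable {m n : ℕ}

variable (R) in
noncomputable def pointFinset [Fintype P] (l : L) : Finset P := {p | R.incid p l}

variable (R) in
noncomputable def specialLines [Fintype L] : Finset L := {l | R.SpecialLine l}

variable (R) in
noncomputable def pencil [Fintype L] (x : P) : Finset L := {t | R.incid x t}

@[simp] theorem mem_pointFinset [Fintype P] {p : P} {l : L} :
    p ∈ R.pointFinset l ↔ R.incid p l := by
  simp [pointFinset]

@[simp] theorem mem_specialLines [Fintype L] {l : L} : l ∈ R.specialLines ↔ R.SpecialLine l := by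
  simp [specialLines]

@[simp] theorem mem_pencil [Fintype L] {x : P} {t : L} : t ∈ R.pencil x ↔ R.incid x t := by
  simp [pencil]

theorem HasOrder.card_specialLines [Fintype L] (h : R.HasOrder m n) :
    #R.specialLines = m + 1 := by
  rw [← h.1, ← Set.ncard_coe_finset]
  congr 1
  ext
  simp

theorem HasOrder.card_pointFinset_special [Fintype P] (h : R.HasOrder m n) {s : L}
    (hs : R.SpecialLine s) : #(R.pointFinset s) = n + 1 := by
  rw [← h.2 s hs, ← Set.ncard_coe_finset]
  congr 1
  ext
  simp [points]

theorem three_le_card_pointFinset [Fintype P] (l : L) : 3 ≤ #(R.pointFinset l) := by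
  obtain ⟨a, b, c, hab, hac, hbc, ha, hb, hc⟩ := R.A3 l
  exact two_lt_card.2 ⟨a, by simpa, b, by simpa, c, by simpa, hab, hac, hbc⟩

theorem HasOrder.card_pointFinset_ordinary [Fintype P] [Fintype L] (h : R.HasOrder m n) {l : L}
    (hl : R.OrdinaryLine l) : #(R.pointFinset l) = m + 1 := by
  rw [← h.card_specialLines]
  refine le_antisymm (card_le_card_of_forall_subsingleton (fun p s => R.incid p s) ?_ ?_)
    (card_le_card_of_forall_subsingleton (fun s p => R.incid p s) ?_ ?_)
  · intro p hp
    simpa [and_comm] using exists_special_incid (ne_D_of_incid hl (mem_pointFinset.1 hp))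
  · intro s hs p hp q hq
    exact point_eq (ne_of_special_of_ordinary (mem_specialLines.1 hs) hl)
      (mem_pointFinset.1 hp.1) hp.2 (mem_pointFinset.1 hq.1) hq.2
  · intro s hs
    replace hs := mem_specialLines.1 hs
    obtain ⟨p, hps, hpl⟩ := meets_of_special hs (ne_of_special_of_ordinary hs hl)
    exact ⟨p, mem_pointFinset.2 hpl, hps⟩
  · intro p hp s hs s' hs'
    exact line_eq (ne_D_of_incid hl (mem_pointFinset.1 hp)) hs.2 (mem_specialLines.1 hs.1)
      hs'.2 (mem_specialLines.1 hs'.1)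

theorem HasOrder.two_le [Fintype P] [Fintype L] (h : R.HasOrder m n) {l : L}
    (hl : R.OrdinaryLine l) : 2 ≤ m := by
  have := three_le_card_pointFinset (R := R) l
  rw [h.card_pointFinset_ordinary hl] at this
  omega

theorem card_pencil_meets [Fintype P] [Fintype L] {x : P} {g : L} (hxg : ¬ R.incid x g) :
    #{t ∈ R.pencil x | R.Meets g t} = #(R.pointFinset g) := by
  have hne : ∀ {p}, R.incid p g → x ≠ p := fun hp hxp => hxg (hxp ▸ hp)
  refine le_antisymm (card_le_card_of_forall_subsingleton (fun t p => R.incid p t) ?_ ?_)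
    (card_le_card_of_forall_subsingleton (fun p t => R.incid p t) ?_ ?_)
  · intro t ht
    obtain ⟨p, hpg, hpt⟩ := (mem_filter.1 ht).2
    exact ⟨p, mem_pointFinset.2 hpg, hpt⟩
  · intro p hp t ht t' ht'
    exact line_eq (hne (mem_pointFinset.1 hp)) (mem_pencil.1 (mem_filter.1 ht.1).1) ht.2
      (mem_pencil.1 (mem_filter.1 ht'.1).1) ht'.2
  · intro p hp
    obtain ⟨t, hxt, hpt⟩ := (R.A1 x p (hne (mem_pointFinset.1 hp))).exists
    exact ⟨t, mem_filter.2 ⟨mem_pencil.2 hxt, p, mem_pointFinset.1 hp, hpt⟩, hpt⟩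
  · intro t ht p hp q hq
    have htg : t ≠ g := fun htg => hxg (htg ▸ mem_pencil.1 (mem_filter.1 ht).1)
    exact point_eq htg hp.2 (mem_pointFinset.1 hp.1) hq.2 (mem_pointFinset.1 hq.1)

theorem HasOrder.exists_special_not_incid [Fintype L] (h : R.HasOrder m n) (hm : 1 ≤ m)
    {x : P} (hx : x ≠ R.D) : ∃ s, R.SpecialLine s ∧ ¬ R.incid x s := by
  obtain ⟨s, hs, s', hs', hss'⟩ := one_lt_card.1 (show 1 < #R.specialLines by
    rw [h.card_specialLines]; omega)
  by_contra! hall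
  exact hss' (line_eq hx (hall s (mem_specialLines.1 hs)) (mem_specialLines.1 hs)
    (hall s' (mem_specialLines.1 hs')) (mem_specialLines.1 hs'))

theorem HasOrder.card_pencil [Fintype P] [Fintype L] (h : R.HasOrder m n) (hm : 1 ≤ m)
    {x : P} (hx : x ≠ R.D) : #(R.pencil x) = n + 1 := by
  obtain ⟨s, hs, hxs⟩ := h.exists_special_not_incid hm hx
  rw [← h.card_pointFinset_special hs, ← card_pencil_meets hxs, filter_true_of_mem]
  intro t ht
  exact meets_of_special hs fun hts => hxs (hts ▸ mem_pencil.1 ht)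

theorem HasOrder.card_ordinary_pencil [Fintype P] [Fintype L] (h : R.HasOrder m n) (hm : 1 ≤ m)
    {x : P} (hx : x ≠ R.D) : #{t ∈ R.pencil x | R.OrdinaryLine t} = n := by
  obtain ⟨s, hs, hxs⟩ := exists_special_incid hx
  have : {t ∈ R.pencil x | R.OrdinaryLine t} = (R.pencil x).erase s := by
    ext t
    simp only [mem_filter, mem_erase, mem_pencil]
    exact ⟨fun ⟨hxt, ht⟩ => ⟨ne_of_special_of_ordinary hs ht, hxt⟩,
      fun ⟨hts, hxt⟩ => ⟨hxt, fun ht => hts (line_eq hx hxt ht hxs hs)⟩⟩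
  rw [this, card_erase_of_mem (mem_pencil.2 hxs), h.card_pencil hm hx]
  rfl

variable (R) in
noncomputable def transversalClass [Fintype L] (l1 : L) (x : P) (g : L) : Finset L :=
  {t ∈ R.pencil x | R.OrdinaryLine t ∧ t ≠ l1 ∧ R.Meets g t}

theorem HasOrder.card_transversalClass [Fintype P] [Fintype L] (h : R.HasOrder m n)
    {l1 g : L} {x : P} (hl1 : R.OrdinaryLine l1) (hx : R.incid x l1) (hg : R.OrdinaryLine g)
    (hxg : ¬ R.incid x g) (hgl1 : R.Meets g l1) : #(R.transversalClass l1 x g) = m - 1 := by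
  have hxD := ne_D_of_incid hl1 hx
  obtain ⟨s, hs, hxs⟩ := exists_special_incid hxD
  have : R.transversalClass l1 x g = (({t ∈ R.pencil x | R.Meets g t}).erase s).erase l1 := by
    ext t
    simp only [transversalClass, mem_filter, mem_erase, mem_pencil]
    exact ⟨fun ⟨hxt, ht, htl1, htg⟩ => ⟨htl1, ne_of_special_of_ordinary hs ht, hxt, htg⟩,
      fun ⟨htl1, hts, hxt, htg⟩ => ⟨hxt, fun ht => hts (line_eq hxD hxt ht hxs hs), htl1, htg⟩⟩
  have hs_mem : s ∈ {t ∈ R.pencil x | R.Meets g t} :=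
    mem_filter.2 ⟨mem_pencil.2 hxs, (meets_of_special hs (ne_of_special_of_ordinary hs hg)).symm⟩
  have hl1_mem : l1 ∈ ({t ∈ R.pencil x | R.Meets g t}).erase s :=
    mem_erase.2 ⟨ne_of_special_of_ordinary hs hl1, mem_filter.2 ⟨mem_pencil.2 hx, hgl1⟩⟩
  rw [this, card_erase_of_mem hl1_mem, card_erase_of_mem hs_mem, card_pencil_meets hxg,
    h.card_pointFinset_ordinary hg]
  rfl

theorem transversalClass_subset [Fintype L] {l1 t g g' : L} {x : P} (hl1 : R.OrdinaryLine l1)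
    (hx : R.incid x l1) (hg : R.OrdinaryLine g) (hxg : ¬ R.incid x g) (hxg' : ¬ R.incid x g')
    (hgl1 : R.Meets g l1) (hg'l1 : R.Meets g' l1) (ht : t ∈ R.transversalClass l1 x g)
    (ht' : t ∈ R.transversalClass l1 x g') :
    R.transversalClass l1 x g ⊆ R.transversalClass l1 x g' := by
  simp only [transversalClass, mem_filter, mem_pencil] at ht ht'
  intro t' ht''
  simp only [transversalClass, mem_filter, mem_pencil] at ht'' ⊢
  exact ⟨ht''.1, ht''.2.1, ht''.2.2.1, meets_of_common_transversal hl1 hx ht.2.1 ht.1 ht.2.2.1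
    ht''.1 hg hxg hxg' hgl1 hg'l1 ht.2.2.2 ht'.2.2.2 ht''.2.2.2⟩

theorem HasOrder.sub_one_dvd_sub_one [Fintype P] [Fintype L] (h : R.HasOrder m n) {l1 : L}
    {x : P} (hl1 : R.OrdinaryLine l1) (hx : R.incid x l1) : m - 1 ∣ n - 1 := by
  have hS : #{t ∈ R.pencil x | R.OrdinaryLine t ∧ t ≠ l1} = n - 1 := by
    rw [← filter_filter, filter_ne', card_erase_of_mem (by simpa using ⟨hx, hl1⟩),
      h.card_ordinary_pencil (by have := h.two_le hl1; omega) (ne_D_of_incid hl1 hx)]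
  rw [← hS]
  refine dvd_card_of_cover (I := {g | R.OrdinaryLine g ∧ ¬ R.incid x g ∧ R.Meets g l1})
    (R.transversalClass l1 x) ?_ ?_ ?_ ?_
  · intro t ht
    simp only [mem_filter, mem_pencil] at ht
    obtain ⟨g, hg, hxg, hgl1, hgt⟩ := exists_transversal hl1 hx ht.1 ht.2.2
    exact ⟨g, ⟨hg, hxg, hgl1⟩, by simpa [transversalClass, ht] using hgt⟩
  · intro g _ t ht
    simp only [transversalClass, mem_filter] at ht ⊢
    exact ⟨ht.1, ht.2.1, ht.2.2.1⟩
  · rintro g ⟨hg, hxg, hgl1⟩ g' ⟨hg', hxg', hg'l1⟩ t ht ht'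
    exact (transversalClass_subset hl1 hx hg hxg hxg' hgl1 hg'l1 ht ht').antisymm
      (transversalClass_subset hl1 hx hg' hxg' hxg hg'l1 hgl1 ht' ht)
  · rintro g ⟨hg, hxg, hgl1⟩
    exact h.card_transversalClass hl1 hx hg hxg hgl1

theorem card_filter_not_ordinary_join_le_one [Fintype P] {a : P} {l : L} (ha : a ≠ R.D)
    (hl : R.OrdinaryLine l) :
    #{b ∈ R.pointFinset l | ¬ ∃ g, R.OrdinaryLine g ∧ R.incid a g ∧ R.incid b g} ≤ 1 := by
  have special_join : ∀ {b}, R.incid b l → (¬ ∃ g, R.OrdinaryLine g ∧ R.incid a g ∧ R.incid b g) →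
      ∃ s, R.SpecialLine s ∧ R.incid a s ∧ R.incid b s := by
    intro b hb hno
    have hab : a ≠ b := fun hab => hno ⟨l, hl, hab ▸ hb, hb⟩
    obtain ⟨s, has, hbs⟩ := (R.A1 a b hab).exists
    exact ⟨s, not_not.1 fun hs => hno ⟨s, hs, has, hbs⟩, has, hbs⟩
  refine card_le_one.2 fun b hb b' hb' => ?_
  simp only [mem_filter, mem_pointFinset] at hb hb'
  obtain ⟨s, hs, has, hbs⟩ := special_join hb.1 hb.2
  obtain ⟨s', hs', has', hb's'⟩ := special_join hb'.1 hb'.2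
  have hss' : s = s' := line_eq ha has hs has' hs'
  exact point_eq (ne_of_special_of_ordinary hs hl).symm hbs hb.1 (hss' ▸ hb's') hb'.1

variable (R) in
noncomputable def ordinaryJoinPairs [Fintype P] [Fintype L] (l1 l2 : L) (a0 b0 : P) :
    Finset (Σ _ : P, P) :=
  ((R.pointFinset l1).erase a0).sigma fun a =>
    {b ∈ (R.pointFinset l2).erase b0 | ∃ g, R.OrdinaryLine g ∧ R.incid a g ∧ R.incid b g}

theorem HasOrder.le_card_ordinaryJoinPairs [Fintype P] [Fintype L] (h : R.HasOrder m n)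
    {l1 l2 : L} {a0 b0 : P} (hl1 : R.OrdinaryLine l1) (hl2 : R.OrdinaryLine l2)
    (ha0 : R.incid a0 l1) (hb0 : R.incid b0 l2) :
    m * (m - 1) ≤ #(R.ordinaryJoinPairs l1 l2 a0 b0) := by
  have hcard : ∀ {l p}, R.OrdinaryLine l → R.incid p l → #((R.pointFinset l).erase p) = m := by
    intro l p hl hp
    rw [card_erase_of_mem (mem_pointFinset.2 hp), h.card_pointFinset_ordinary hl,
      Nat.add_sub_cancel]
  rw [ordinaryJoinPairs, card_sigma]
  calc m * (m - 1) = #((R.pointFinset l1).erase a0) • (m - 1) := by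
        rw [hcard hl1 ha0, smul_eq_mul]
    _ ≤ _ := card_nsmul_le_sum _ _ _ fun a ha => ?_
  have ha := ne_D_of_incid hl1 (mem_pointFinset.1 (mem_of_mem_erase ha))
  have hbad : #{b ∈ (R.pointFinset l2).erase b0 |
      ¬ ∃ g, R.OrdinaryLine g ∧ R.incid a g ∧ R.incid b g} ≤ 1 :=
    (card_filter_not_ordinary_join_le_one ha hl2).trans'
      (card_le_card fun b => by simp only [mem_filter, mem_erase]; tauto)
  have := card_filter_add_card_filter_not (s := (R.pointFinset l2).erase b0)
    (fun b => ∃ g, R.OrdinaryLine g ∧ R.incid a g ∧ R.incid b g)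
  rw [hcard hl2 hb0] at this
  omega

theorem card_ordinaryJoinPairs_le [Fintype P] [Fintype L] {l1 l2 s : L} {a0 b0 : P}
    (hl1 : R.OrdinaryLine l1) (hl2 : R.OrdinaryLine l2) (hd : ¬ R.Meets l1 l2)
    (hs : R.SpecialLine s) (ha0s : R.incid a0 s) (ha0 : R.incid a0 l1) (hb0s : R.incid b0 s)
    (hb0 : R.incid b0 l2) :
    #(R.ordinaryJoinPairs l1 l2 a0 b0) ≤ #((((R.pointFinset s).erase R.D).erase a0).erase b0) := by
  refine card_le_card_of_forall_subsingleton (fun (q : Σ _ : P, P) z =>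
    ∃ g, R.OrdinaryLine g ∧ R.incid q.1 g ∧ R.incid q.2 g ∧ R.incid z g) ?_ ?_
  · rintro ⟨a, b⟩ hab
    simp only [ordinaryJoinPairs, mem_sigma, mem_filter, mem_erase, mem_pointFinset] at hab
    obtain ⟨⟨haa0, ha⟩, ⟨hbb0, hb⟩, g, hg, hag, hbg⟩ := hab
    obtain ⟨z, hzs, hzg⟩ := meets_of_special hs (ne_of_special_of_ordinary hs hg)
    have hgl1 : g ≠ l1 := fun hgl1 => hd ⟨b, hgl1 ▸ hbg, hb⟩
    have hgl2 : g ≠ l2 := fun hgl2 => hd ⟨a, ha, hgl2 ▸ hag⟩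
    refine ⟨z, ?_, g, hg, hag, hbg, hzg⟩
    simp only [mem_erase, mem_pointFinset]
    exact ⟨fun hzb0 => hbb0 (point_eq hgl2 hbg hb (hzb0 ▸ hzg) hb0),
      fun hza0 => haa0 (point_eq hgl1 hag ha (hza0 ▸ hzg) ha0), ne_D_of_incid hg hzg, hzs⟩
  · intro z hz ⟨a, b⟩ ⟨hab, g, hg, hag, hbg, hzg⟩ ⟨a', b'⟩ ⟨hab', g', hg', ha'g', hb'g', hzg'⟩
    simp only [mem_erase, mem_pointFinset] at hz
    simp only [ordinaryJoinPairs, mem_sigma, mem_filter, mem_erase, mem_pointFinset] at hab hab'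
    obtain rfl := transversal_eq hd hg hg' hzg hzg'
      (fun hz1 => hz.2.1 (point_eq (ne_of_special_of_ordinary hs hl1).symm hz.2.2.2 hz1 ha0s ha0))
      (fun hz2 => hz.1 (point_eq (ne_of_special_of_ordinary hs hl2).symm hz.2.2.2 hz2 hb0s hb0))
      hab.1.2 hag hab.2.1.2 hbg hab'.1.2 ha'g' hab'.2.1.2 hb'g'
    have hgl1 : g ≠ l1 := fun hgl1 => hd ⟨b, hgl1 ▸ hbg, hab.2.1.2⟩
    have hgl2 : g ≠ l2 := fun hgl2 => hd ⟨a, hab.1.2, hgl2 ▸ hag⟩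
    obtain rfl := point_eq hgl1 hag hab.1.2 ha'g' hab'.1.2
    obtain rfl := point_eq hgl2 hbg hab.2.1.2 hb'g' hab'.2.1.2
    rfl

theorem HasOrder.mul_sub_one_add_two_le [Fintype P] [Fintype L] (h : R.HasOrder m n)
    {l1 l2 : L} (hl1 : R.OrdinaryLine l1) (hl2 : R.OrdinaryLine l2) (hd : ¬ R.Meets l1 l2) :
    m * (m - 1) + 2 ≤ n := by
  obtain ⟨s, hs⟩ := card_pos.1 (show 0 < #R.specialLines by rw [h.card_specialLines]; omega)
  replace hs := mem_specialLines.1 hs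
  obtain ⟨a0, ha0s, ha0⟩ := meets_of_special hs (ne_of_special_of_ordinary hs hl1)
  obtain ⟨b0, hb0s, hb0⟩ := meets_of_special hs (ne_of_special_of_ordinary hs hl2)
  have hpairs := (h.le_card_ordinaryJoinPairs hl1 hl2 ha0 hb0).trans
    (card_ordinaryJoinPairs_le hl1 hl2 hd hs ha0s ha0 hb0s hb0)
  have h3 := three_le_card_pointFinset (R := R) s
  rw [card_erase_of_mem, card_erase_of_mem, card_erase_of_mem,
    h.card_pointFinset_special hs] at hpairs
  · rw [h.card_pointFinset_special hs] at h3
    omega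
  all_goals simp only [mem_erase, mem_pointFinset]
  · exact hs
  · exact ⟨ne_D_of_incid hl1 ha0, ha0s⟩
  · exact ⟨fun hab => hd ⟨a0, ha0, hab ▸ hb0⟩, ne_D_of_incid hl2 hb0, hb0s⟩

end Finite

end ProjRect

/-- A nontrivial finite projective rectangle of order (m,n) satisfies n ≥ m^2. -/
theorem stmt5 {P L : Type*} [Fintype P] [Fintype L] (R : ProjRect P L) (m n : ℕ)
    (h : R.HasOrder m n) (hnt : R.Nontrivial) :
    m ^ 2 ≤ n := by
  obtain ⟨l1, l2, hl1, hl2, hd⟩ := hnt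
  obtain ⟨x, -, -, -, -, -, hx, -, -⟩ := R.A3 l1
  exact Nat.sq_le_of_sub_one_dvd (h.sub_one_dvd_sub_one hl1 hx)
    (h.mul_sub_one_add_two_le hl1 hl2 fun ⟨p, hp1, hp2⟩ => hd p ⟨hp1, hp2⟩)
end

section
/- The graph of lines of a nontrivial finite projective rectangle has diameter exactly 2; the graph of lines of a trivial projective rectangle (projective plane) is a complete graph. -/
open scoped Classical

namespace SimpleGraph

variable {V : Type*} {G : SimpleGraph V} {u v : V}

lemma dist_eq_two_iff :
    G.dist u v = 2 ↔ u ≠ v ∧ ¬G.Adj u v ∧ (G.commonNeighbors u v).Nonempty := by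
  rw [← edist_eq_two_iff]
  refine ⟨fun h => ?_, fun h => ?_⟩
  · rw [← (Reachable.of_dist_ne_zero (h ▸ two_ne_zero)).coe_dist_eq_edist, h, Nat.cast_ofNat]
  · have hreach : G.Reachable u v := reachable_of_edist_ne_top (h ▸ ENat.natCast_ne_top 2)
    exact_mod_cast hreach.coe_dist_eq_edist.trans h

lemma dist_le_two_of_commonNeighbors_nonempty
    (h : ∀ u v, u ≠ v → ¬G.Adj u v → (G.commonNeighbors u v).Nonempty) (u v : V) :
    G.dist u v ≤ 2 := by
  by_cases huv : u = v
  · simp [huv]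
  by_cases hadj : G.Adj u v
  · simp [dist_eq_one_iff_adj.mpr hadj]
  · exact (dist_eq_two_iff.mpr ⟨huv, hadj, h u v huv hadj⟩).le

end SimpleGraph

namespace ProjRect

variable {P L : Type*} (R : ProjRect P L)

lemma eq_of_incid_of_incid {p q : P} (hpq : p ≠ q) {l l' : L} (hpl : R.incid p l)
    (hql : R.incid q l) (hpl' : R.incid p l') (hql' : R.incid q l') : l = l' :=
  (R.A1 p q hpq).unique ⟨hpl, hql⟩ ⟨hpl', hql'⟩

lemma exists_incid_not_incid_of_ordinaryLine {l s : L} (hl : R.OrdinaryLine l)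
    (hs : R.SpecialLine s) : ∃ p, R.incid p l ∧ ¬R.incid p s := by
  obtain ⟨p₁, p₂, -, h₁₂, -, -, hp₁, hp₂, -⟩ := R.A3 l
  by_contra! hcontra
  exact hl (R.eq_of_incid_of_incid h₁₂ hp₁ hp₂ (hcontra p₁ hp₁) (hcontra p₂ hp₂) ▸ hs)

/-- Join `q` to a point of `l` off the special line `Dq`; the joining line cannot pass through `D`,
since the only line through `D` and `q` is `Dq`. -/
lemma exists_ordinaryLine_incid_meeting {q : P} (hq : R.OrdinaryPoint q) {l : L}
    (hl : R.OrdinaryLine l) (hql : ¬R.incid q l) :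
    ∃ g, R.OrdinaryLine g ∧ R.incid q g ∧ ∃ p, R.incid p g ∧ R.incid p l := by
  obtain ⟨s, ⟨hDs, hqs⟩, -⟩ := R.A1 R.D q (Ne.symm hq)
  obtain ⟨p, hpl, hps⟩ := R.exists_incid_not_incid_of_ordinaryLine hl hDs
  have hpq : p ≠ q := fun h => hql (h ▸ hpl)
  obtain ⟨g, ⟨hpg, hqg⟩, -⟩ := R.A1 p q hpq
  refine ⟨g, fun hDg => ?_, hqg, p, hpg, hpl⟩
  exact hps (R.eq_of_incid_of_incid (Ne.symm hq) hDg hqg hDs hqs ▸ hpg)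

lemma lineGraph_commonNeighbors_nonempty {u v : {l : L // R.OrdinaryLine l}}
    (hdisj : ∀ p : P, ¬(R.incid p u.1 ∧ R.incid p v.1)) :
    (R.lineGraph.commonNeighbors u v).Nonempty := by
  obtain ⟨q, -, -, -, -, -, hqv, -, -⟩ := R.A3 v.1
  have hqD : R.OrdinaryPoint q := fun h => v.2 (h ▸ hqv)
  obtain ⟨g, hg, hqg, p, hpg, hpu⟩ :=
    R.exists_ordinaryLine_incid_meeting hqD u.2 fun hqu => hdisj q ⟨hqu, hqv⟩
  have hug : u ≠ ⟨g, hg⟩ := fun h => hdisj q ⟨h ▸ hqg, hqv⟩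
  have hvg : v ≠ ⟨g, hg⟩ := fun h => hdisj p ⟨hpu, h ▸ hpg⟩
  exact ⟨⟨g, hg⟩, ⟨hug, p, hpu, hpg⟩, hvg, q, hqv, hqg⟩

lemma lineGraph_dist_le_two (u v : {l : L // R.OrdinaryLine l}) : R.lineGraph.dist u v ≤ 2 :=
  SimpleGraph.dist_le_two_of_commonNeighbors_nonempty
    (fun _ _ huv hadj => R.lineGraph_commonNeighbors_nonempty fun p hp => hadj ⟨huv, p, hp⟩) u v

lemma lineGraph_dist_eq_two {u v : {l : L // R.OrdinaryLine l}}
    (hdisj : ∀ p : P, ¬(R.incid p u.1 ∧ R.incid p v.1)) : R.lineGraph.dist u v = 2 := by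
  obtain ⟨p, -, -, -, -, -, hp, -, -⟩ := R.A3 u.1
  refine SimpleGraph.dist_eq_two_iff.mpr ⟨fun h => hdisj p ⟨hp, h ▸ hp⟩, ?_,
    R.lineGraph_commonNeighbors_nonempty hdisj⟩
  rintro ⟨-, q, hq⟩
  exact hdisj q hq

end ProjRect

theorem stmt12_general {P L : Type*} (R : ProjRect P L) :
    (R.Nontrivial →
      (∀ u v : {l : L // R.OrdinaryLine l}, (R.lineGraph).dist u v ≤ 2) ∧
      (∃ u v : {l : L // R.OrdinaryLine l}, (R.lineGraph).dist u v = 2)) ∧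
    (¬R.Nontrivial →
      ∀ u v : {l : L // R.OrdinaryLine l}, u ≠ v → (R.lineGraph).Adj u v) := by
  refine ⟨fun ⟨l₁, l₂, h₁, h₂, hdisj⟩ => ⟨R.lineGraph_dist_le_two, ?_⟩, fun htriv u v huv => ?_⟩
  · exact ⟨⟨l₁, h₁⟩, ⟨l₂, h₂⟩, R.lineGraph_dist_eq_two hdisj⟩
  · by_contra hnadj
    exact htriv ⟨u.1, v.1, u.2, v.2, fun p hp => hnadj ⟨huv, p, hp⟩⟩

/-- The graph of lines of a nontrivial finite projective rectangle has diameter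
exactly 2; for a trivial projective rectangle (projective plane) it is a complete graph. -/
theorem stmt12 {P L : Type*} [Fintype P] [Fintype L] (R : ProjRect P L) (m n : ℕ)
    (h : R.HasOrder m n) :
    (R.Nontrivial →
      (∀ u v : {l : L // R.OrdinaryLine l}, (R.lineGraph).dist u v ≤ 2) ∧
      (∃ u v : {l : L // R.OrdinaryLine l}, (R.lineGraph).dist u v = 2)) ∧
    (¬R.Nontrivial →
      ∀ u v : {l : L // R.OrdinaryLine l}, u ≠ v → (R.lineGraph).Adj u v) :=
  stmt12_general R
end
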